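/- arXiv:1201.4161 — 9 statements merged into one kernel-verified Lean document; each statement's English description precedes it below -/
import Mathlib

section
/- Let a > 2 be real, A = [[α, β],[γ, −α]] with det A = 1 and γ ≠ 0, S = [[1,a],[0,1]], and N = A·S with entries of N^k denoted α_k, β_k, γ_k, δ_k. Then for all k ≥ 1: γ_{k+1}² + γ_k² − a·γ·γ_k·γ_{k+1} = γ². -/
/-!
`N = A S` has determinant `1` and trace `a γ`, so by Cayley–Hamilton `N² = a γ N - 1` and every
entry of `N ^ k` satisfies `x (k + 2) = a γ x (k + 1) - x k`. The quadratic form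
`x (k + 1)² + x k² - a γ x k x (k + 1)` is invariant under this recurrence; for the lower left
entries it starts at `γ² + 0 - 0`.
-/

open Matrix Polynomial

theorem Matrix.sq_eq_trace_smul_sub_det_smul {R : Type*} [CommRing R] [Nontrivial R]
    (M : Matrix (Fin 2) (Fin 2) R) : M ^ 2 = M.trace • M - M.det • 1 := by
  have h := M.aeval_self_charpoly
  rw [charpoly_fin_two] at h
  simp only [map_add, map_sub, map_mul, map_pow, aeval_X, aeval_C, Algebra.algebraMap_eq_smul_one,
    smul_mul_assoc, one_mul] at h
  rw [← sub_eq_zero, ← h]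
  abel

theorem Matrix.pow_add_two_apply_of_sq_eq {R : Type*} [CommRing R] {n : Type*} [Fintype n]
    [DecidableEq n] {M : Matrix n n R} {t : R} (hM : M ^ 2 = t • M - 1) (k : ℕ) (i j : n) :
    (M ^ (k + 2)) i j = t * (M ^ (k + 1)) i j - (M ^ k) i j := by
  rw [pow_add, hM, mul_sub, Matrix.mul_smul, mul_one, ← pow_succ]
  rfl

theorem sq_add_sq_sub_mul_eq_of_add_two {R : Type*} [CommRing R] {x : ℕ → R} {t : R}
    (hx : ∀ k, x (k + 2) = t * x (k + 1) - x k) (k : ℕ) :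
    x (k + 1) ^ 2 + x k ^ 2 - t * x k * x (k + 1) = x 1 ^ 2 + x 0 ^ 2 - t * x 0 * x 1 := by
  induction k with
  | zero => rfl
  | succ k ih => rw [hx, ← ih]; ring

theorem stmt_1_general (a α β γ : ℝ)
    (A : Matrix (Fin 2) (Fin 2) ℝ) (hA : A = !![α, β; γ, -α]) (hdet : A.det = 1)
    (S : Matrix (Fin 2) (Fin 2) ℝ) (hS : S = !![1, a; 0, 1])
    (N : Matrix (Fin 2) (Fin 2) ℝ) (hN : N = A * S) :
    ∀ k : ℕ, 1 ≤ k →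
      ((N ^ (k + 1)) 1 0) ^ 2 + ((N ^ k) 1 0) ^ 2
        - a * γ * ((N ^ k) 1 0) * ((N ^ (k + 1)) 1 0) = γ ^ 2 := by
  intro k _
  have hNdet : N.det = 1 := by rw [hN, det_mul, hdet, hS, det_fin_two_of]; ring
  have hNtrace : N.trace = a * γ := by
    rw [hN, hA, hS, mul_fin_two, trace_fin_two_of]; ring
  have hNsq : N ^ 2 = (a * γ) • N - 1 := by
    rw [N.sq_eq_trace_smul_sub_det_smul, hNtrace, hNdet, one_smul]
  have hN10 : N 1 0 = γ := by simp [hN, hA, hS]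
  rw [sq_add_sq_sub_mul_eq_of_add_two (x := fun k ↦ (N ^ k) 1 0)
    (fun k ↦ pow_add_two_apply_of_sq_eq hNsq k 1 0) k]
  simp [hN10]

theorem stmt_1 (a α β γ : ℝ) (ha : 2 < a) (hγ : γ ≠ 0)
    (A : Matrix (Fin 2) (Fin 2) ℝ) (hA : A = !![α, β; γ, -α]) (hdet : A.det = 1)
    (S : Matrix (Fin 2) (Fin 2) ℝ) (hS : S = !![1, a; 0, 1])
    (N : Matrix (Fin 2) (Fin 2) ℝ) (hN : N = A * S) :
    ∀ k : ℕ, 1 ≤ k →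
      ((N ^ (k + 1)) 1 0) ^ 2 + ((N ^ k) 1 0) ^ 2
        - a * γ * ((N ^ k) 1 0) * ((N ^ (k + 1)) 1 0) = γ ^ 2 :=
  stmt_1_general a α β γ A hA hdet S hS N hN
end

section
/- Let a > 2 be real, A = [[α, β],[γ, −α]] with det A = 1 and γ > 0, S = [[1,a],[0,1]], N = A·S, and suppose N is hyperbolic. Write N^k = [[α_k, β_k],[γ_k, δ_k]] and suppose γ_k, γ_{k+1} ≠ 0 and α_{k+1}/γ_{k+1} < α_k/γ_k. Then the shadows of N^{k+1}·∞ and N^k·∞ overlap, i.e. α_{k+1}/γ_{k+1} + 1/(a·γ_{k+1}²) > α_k/γ_k − 1/(a·γ_k²). -/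
/-!
For `M ∈ SL₂`, the lower-left entries `c_m` of `M ^ m` satisfy `c_{m+2} = (tr M) c_{m+1} - c_m`
(Cayley–Hamilton), so the quadratic form `c_m² + c_{m+1}² - (tr M) c_m c_{m+1}` is constant in `m`,
equal to `c_1²`. For `N = A S` we have `tr N = a γ` and `c_1 = γ`, while `det N^k = 1` gives
`α_k γ_{k+1} - α_{k+1} γ_k = γ`. Hence the overlap quantity
`a γ_k γ_{k+1} (α_{k+1} γ_k - γ_{k+1} α_k) + γ_k² + γ_{k+1}²` equals `γ² > 0`.
-/

namespace Matrix

variable {R : Type*} [CommRing R]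

theorem mul_self_eq_trace_smul_sub_det_smul_one (M : Matrix (Fin 2) (Fin 2) R) :
    M * M = M.trace • M - M.det • (1 : Matrix (Fin 2) (Fin 2) R) := by
  ext i j
  fin_cases i <;> fin_cases j <;>
    simp [mul_apply, Fin.sum_univ_two, trace_fin_two, det_fin_two] <;> ring

theorem pow_add_two_one_zero {M : Matrix (Fin 2) (Fin 2) R} (hM : M.det = 1) (m : ℕ) :
    (M ^ (m + 2)) 1 0 = M.trace * (M ^ (m + 1)) 1 0 - (M ^ m) 1 0 := by
  rw [pow_add, sq, mul_self_eq_trace_smul_sub_det_smul_one, hM, one_smul, mul_sub,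
    Matrix.mul_smul, mul_one, ← pow_succ, sub_apply, smul_apply, smul_eq_mul]

theorem pow_one_zero_sq_add_sq_sub_trace_mul {M : Matrix (Fin 2) (Fin 2) R} (hM : M.det = 1)
    (m : ℕ) :
    (M ^ m) 1 0 ^ 2 + (M ^ (m + 1)) 1 0 ^ 2 - M.trace * (M ^ m) 1 0 * (M ^ (m + 1)) 1 0 =
      M 1 0 ^ 2 := by
  induction m with
  | zero => simp
  | succ n ih =>
    rw [pow_add_two_one_zero hM n]
    linear_combination ih

theorem apply_zero_zero_mul_mul_apply_one_zero_sub (P M : Matrix (Fin 2) (Fin 2) R) :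
    P 0 0 * (P * M) 1 0 - (P * M) 0 0 * P 1 0 = P.det * M 1 0 := by
  simp only [mul_apply, Fin.sum_univ_two, det_fin_two]
  ring

end Matrix

theorem shadows_overlap_iff {K : Type*} [Field K] [LinearOrder K] [IsStrictOrderedRing K]
    {a x₀ y₀ x₁ y₁ : K} (ha : 0 < a) (hy₀ : y₀ ≠ 0) (hy₁ : y₁ ≠ 0) :
    x₁ / y₁ + 1 / (a * y₁ ^ 2) > x₀ / y₀ - 1 / (a * y₀ ^ 2) ↔
      0 < a * y₀ * y₁ * (x₁ * y₀ - y₁ * x₀) + y₁ ^ 2 + y₀ ^ 2 := by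
  have hden : 0 < a * y₀ ^ 2 * y₁ ^ 2 := by positivity
  have hgap : x₁ / y₁ + 1 / (a * y₁ ^ 2) - (x₀ / y₀ - 1 / (a * y₀ ^ 2)) =
      (a * y₀ * y₁ * (x₁ * y₀ - y₁ * x₀) + y₁ ^ 2 + y₀ ^ 2) / (a * y₀ ^ 2 * y₁ ^ 2) := by
    field_simp
    ring
  rw [gt_iff_lt, ← sub_pos, hgap, div_pos_iff_of_pos_right hden]

theorem stmt_4_general (a α β γ : ℝ) (ha : 2 < a) (hγ : 0 < γ)
    (A : Matrix (Fin 2) (Fin 2) ℝ) (hA : A = !![α, β; γ, -α]) (hdet : A.det = 1)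
    (S : Matrix (Fin 2) (Fin 2) ℝ) (hS : S = !![1, a; 0, 1])
    (N : Matrix (Fin 2) (Fin 2) ℝ) (hN : N = A * S)
    (k : ℕ)
    (hγk : (N ^ k) 1 0 ≠ 0) (hγk1 : (N ^ (k + 1)) 1 0 ≠ 0) :
    (N ^ (k + 1)) 0 0 / (N ^ (k + 1)) 1 0 + 1 / (a * ((N ^ (k + 1)) 1 0) ^ 2)
      > (N ^ k) 0 0 / (N ^ k) 1 0 - 1 / (a * ((N ^ k) 1 0) ^ 2) := by
  have hN10 : N 1 0 = γ := by simp [hN, hA, hS]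
  have htr : N.trace = a * γ := by simp [hN, hA, hS, Matrix.trace_fin_two]; ring
  have hdetN : N.det = 1 := by rw [hN, Matrix.det_mul, hdet, hS, Matrix.det_fin_two_of]; ring
  have hcross : (N ^ k) 0 0 * (N ^ (k + 1)) 1 0 - (N ^ (k + 1)) 0 0 * (N ^ k) 1 0 = γ := by
    rw [pow_succ, Matrix.apply_zero_zero_mul_mul_apply_one_zero_sub, Matrix.det_pow, hdetN,
      one_pow, one_mul, hN10]
  have hinv := Matrix.pow_one_zero_sq_add_sq_sub_trace_mul hdetN k
  rw [htr, hN10] at hinv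
  rw [shadows_overlap_iff (by linarith) hγk hγk1]
  have hoverlap : a * (N ^ k) 1 0 * (N ^ (k + 1)) 1 0 *
      ((N ^ (k + 1)) 0 0 * (N ^ k) 1 0 - (N ^ (k + 1)) 1 0 * (N ^ k) 0 0) +
      (N ^ (k + 1)) 1 0 ^ 2 + (N ^ k) 1 0 ^ 2 = γ ^ 2 := by
    linear_combination -(a * (N ^ k) 1 0 * (N ^ (k + 1)) 1 0) * hcross + hinv
  rw [hoverlap]
  positivity

theorem stmt_4 (a α β γ : ℝ) (ha : 2 < a) (hγ : 0 < γ)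
    (A : Matrix (Fin 2) (Fin 2) ℝ) (hA : A = !![α, β; γ, -α]) (hdet : A.det = 1)
    (S : Matrix (Fin 2) (Fin 2) ℝ) (hS : S = !![1, a; 0, 1])
    (N : Matrix (Fin 2) (Fin 2) ℝ) (hN : N = A * S)
    (hhyp : 2 < |Matrix.trace N|)
    (k : ℕ) (hk : 1 ≤ k)
    (hγk : (N ^ k) 1 0 ≠ 0) (hγk1 : (N ^ (k + 1)) 1 0 ≠ 0)
    (horder : (N ^ (k + 1)) 0 0 / (N ^ (k + 1)) 1 0 < (N ^ k) 0 0 / (N ^ k) 1 0) :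
    (N ^ (k + 1)) 0 0 / (N ^ (k + 1)) 1 0 + 1 / (a * ((N ^ (k + 1)) 1 0) ^ 2)
      > (N ^ k) 0 0 / (N ^ k) 1 0 - 1 / (a * ((N ^ k) 1 0) ^ 2) :=
  stmt_4_general a α β γ ha hγ A hA hdet S hS N hN k hγk hγk1
end

section
/- Let a, b, c be positive reals satisfying the Fricke equation a² + b² + c² = abc. Then the matrices T₀ = [[0, −a/c],[c/a, 0]], T₁ = [[a/c, t],[b/a, −a/c]], T₂ = [[a − b/c, s],[1, −a + b/c]] (with t, s chosen so each has determinant 1) satisfy T₂·T₁·T₀ = [[1, a],[0, 1]], i.e. their product is the translation z ↦ z + a. -/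
/-!
With `p = a/c`, `q = b/a`, `r = a - b/c`, each `Tᵢ` is a trace-zero matrix of determinant one,
which forces `s = -(1 + r²)` and, once `q ≠ 0`, pins down `t`. Divided by `c²`, the Fricke
equation reads `1 + p² = r p q`; this makes `t = -r p`, and then the product `T₂ T₁ T₀` is a ring
identity: it is the parabolic matrix with upper-right entry `p q (1 + r²) - r p²`, which the
Fricke equation again evaluates to `a`.
-/

open Matrix

section TraceZero

variable {R : Type*} [CommRing R]

lemma eq_neg_one_sub_sq_of_det_eq_one {r s : R} (h : det !![r, s; 1, -r] = 1) :
    s = -(1 + r ^ 2) := by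
  rw [det_fin_two_of] at h
  linear_combination -h

lemma eq_neg_mul_of_det_eq_one {K : Type*} [Field K] {p q r t : K} (hq : q ≠ 0)
    (h : det !![p, t; q, -p] = 1) (hpqr : 1 + p ^ 2 = r * p * q) : t = -(r * p) := by
  rw [det_fin_two_of] at h
  apply mul_right_cancel₀ hq
  linear_combination -h - hpqr

lemma mul_mul_eq_parabolic {p q r u : R} (hu : p * u = 1) (hpqr : 1 + p ^ 2 = r * p * q) :
    !![r, -(1 + r ^ 2); 1, -r] * !![p, -(r * p); q, -p] * !![0, -p; u, 0] =
      !![1, p * q * (1 + r ^ 2) - r * p ^ 2; 0, 1] := by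
  ext i j
  fin_cases i <;> fin_cases j <;> simp [mul_apply, Fin.sum_univ_two]
  · linear_combination hu
  · ring
  · linear_combination -hpqr

end TraceZero

section Fricke

variable {a b c : ℝ}

lemma one_add_sq_div_eq_of_fricke (ha : a ≠ 0) (hc : c ≠ 0)
    (hFricke : a ^ 2 + b ^ 2 + c ^ 2 = a * b * c) :
    1 + (a / c) ^ 2 = (a - b / c) * (a / c) * (b / a) := by
  field_simp
  linear_combination hFricke

lemma parabolic_entry_eq_of_fricke (ha : a ≠ 0) (hc : c ≠ 0)
    (hFricke : a ^ 2 + b ^ 2 + c ^ 2 = a * b * c) :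
    a / c * (b / a) * (1 + (a - b / c) ^ 2) - (a - b / c) * (a / c) ^ 2 = a := by
  field_simp
  linear_combination (b - a * c) * hFricke

end Fricke

theorem stmt_5 (a b c : ℝ) (ha : 0 < a) (hb : 0 < b) (hc : 0 < c)
    (hFricke : a ^ 2 + b ^ 2 + c ^ 2 = a * b * c)
    (t s : ℝ)
    (T₀ T₁ T₂ : Matrix (Fin 2) (Fin 2) ℝ)
    (hT₀ : T₀ = !![0, -a / c; c / a, 0])
    (hT₁ : T₁ = !![a / c, t; b / a, -a / c]) (hdet₁ : T₁.det = 1)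
    (hT₂ : T₂ = !![a - b / c, s; 1, -(a) + b / c]) (hdet₂ : T₂.det = 1) :
    T₂ * T₁ * T₀ = !![1, a; 0, 1] := by
  have hpqr := one_add_sq_div_eq_of_fricke ha.ne' hc.ne' hFricke
  have hr : -a + b / c = -(a - b / c) := by ring
  subst hT₀ hT₁ hT₂
  rw [neg_div] at hdet₁ ⊢
  rw [hr] at hdet₂ ⊢
  obtain rfl := eq_neg_mul_of_det_eq_one (by positivity) hdet₁ hpqr
  obtain rfl := eq_neg_one_sub_sq_of_det_eq_one hdet₂
  rw [mul_mul_eq_parabolic (by field_simp) hpqr,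
    parabolic_entry_eq_of_fricke ha.ne' hc.ne' hFricke]
end

section
/- Fix an integer m ≥ 2 and a reduced rational p/q with q ≥ 1. Define σ(r) = r + 1/(m·(den r)²) where den r is the denominator of r in lowest terms. Then the denominator of σ^k(p/q) in lowest terms is m^(2^k − 1)·q^(2^k), and σ^k(p/q) = p/q + m·∑_{n=1}^{k} (m·q)^(−2^n). -/
/-! The numerator `a·m·d + 1` of `a/d + 1/(m·d²)` is `≡ 1` modulo `m·d`, so the step never cancels
and the denominators obey `m·d_{k+1} = (m·d_k)²`, i.e. `m·d_k = (m·q)^(2^k)`. The `k`-th increment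
`1/(m·d_k²)` is therefore `m/(m·q)^(2^(k+1))`. -/

theorem Rat.den_add_one_div_of_den_sq_dvd (s : ℚ) {c : ℕ} (hc : c ≠ 0) (hdvd : s.den ^ 2 ∣ c) :
    (s + 1 / c).den = c := by
  obtain ⟨k, rfl⟩ := hdvd
  set d := s.den
  set x : ℤ := s.num * d * k + 1
  have hx : s + 1 / ((d ^ 2 * k : ℕ) : ℚ) = (x : ℚ) / ((d ^ 2 * k : ℕ) : ℤ) := by
    have hk : (k : ℚ) ≠ 0 := by rintro h; simp_all
    simp only [x, d]
    push_cast
    rw [← Rat.mul_den_eq_num]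
    field_simp
  -- `x ≡ 1` modulo `d * k`, and `d ^ 2 * k` divides `(d * k) ^ 2`.
  have hcop : IsCoprime x ((d ^ 2 * k : ℕ) : ℤ) := by
    have h : IsCoprime x (d * k) := ⟨1, -s.num, by ring⟩
    exact h.pow_right (n := 2) |>.of_isCoprime_of_dvd_right ⟨k, by push_cast; ring⟩
  have := Rat.den_div_eq_of_coprime (by positivity) (Int.isCoprime_iff_gcd_eq_one.mp hcop)
  rw [hx]
  exact_mod_cast this

section RightSuccessor

variable {m : ℕ} {σ : ℚ → ℚ} (hσ : ∀ s : ℚ, σ s = s + 1 / (m * (s.den : ℚ) ^ 2))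
include hσ

theorem den_rightSuccessor (hm : m ≠ 0) (s : ℚ) : (σ s).den = m * s.den ^ 2 := by
  have h := Rat.den_add_one_div_of_den_sq_dvd s (c := m * s.den ^ 2) (by positivity)
    (dvd_mul_left _ _)
  push_cast at h
  rw [hσ, h]

theorem mul_den_iterate_rightSuccessor (hm : m ≠ 0) (r : ℚ) (k : ℕ) :
    m * (σ^[k] r).den = (m * r.den) ^ 2 ^ k := by
  induction k with
  | zero => simp
  | succ k ih =>
    rw [Function.iterate_succ_apply', den_rightSuccessor hσ hm, pow_succ 2 k, pow_mul, ← ih]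
    ring

theorem den_iterate_rightSuccessor (hm : m ≠ 0) (r : ℚ) (k : ℕ) :
    (σ^[k] r).den = m ^ (2 ^ k - 1) * r.den ^ 2 ^ k := by
  refine Nat.eq_of_mul_eq_mul_left (Nat.pos_of_ne_zero hm) ?_
  rw [mul_den_iterate_rightSuccessor hσ hm, mul_pow, ← mul_assoc, ← pow_succ',
    Nat.sub_add_cancel Nat.one_le_two_pow]

theorem iterate_rightSuccessor_eq (hm : m ≠ 0) (r : ℚ) (k : ℕ) :
    σ^[k] r = r + m * ∑ n ∈ Finset.Icc 1 k, 1 / ((m * r.den : ℚ) ^ 2 ^ n) := by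
  induction k with
  | zero => simp
  | succ k ih =>
    have hden : (m : ℚ) * (σ^[k] r).den = (m * r.den : ℚ) ^ 2 ^ k := by
      exact_mod_cast mul_den_iterate_rightSuccessor hσ hm r k
    have hstep :
        1 / (m * ((σ^[k] r).den : ℚ) ^ 2) = m * (1 / (m * r.den : ℚ) ^ 2 ^ (k + 1)) := by
      have : (m : ℚ) ≠ 0 := by exact_mod_cast hm
      rw [pow_succ 2 k, pow_mul, ← hden]
      field_simp
    rw [Function.iterate_succ_apply', hσ, hstep, ih, Finset.sum_Icc_succ_top (by omega)]
    ring

end RightSuccessor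

theorem stmt_8 (m : ℕ) (hm : 2 ≤ m) (r : ℚ)
    (σ : ℚ → ℚ) (hσ : ∀ s : ℚ, σ s = s + 1 / (m * (s.den : ℚ) ^ 2)) :
    ∀ k : ℕ,
      ((σ^[k]) r).den = m ^ (2 ^ k - 1) * r.den ^ (2 ^ k) ∧
      (σ^[k]) r = r + m * ∑ n ∈ Finset.Icc 1 k, 1 / ((m * r.den : ℚ) ^ (2 ^ n)) := by
  have hm0 : m ≠ 0 := by omega
  exact fun k => ⟨den_iterate_rightSuccessor hσ hm0 r k, iterate_rightSuccessor_eq hσ hm0 r k⟩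
end

section
/- Fix an integer m ≥ 2 and a reduced rational p/q with q ≥ 1. The series α = p/q + m·∑_{n=1}^{∞} (m q)^(−2^n) converges, and α is strictly greater than σ^k(p/q) + 1/(m·(m^(2^k−1) q^(2^k))²) for every k ≥ 1, i.e. α lies strictly to the right of the right endpoint of the shadow of every right descendant. -/
/-!
Write `Q = m q`. If `s` has denominator `d`, then `s + 1/(m d²) = (m s.num d + 1)/(m d²)` is already
in lowest terms, so the denominators of the right descendants `σ^[k] r` are `m^(2^k - 1) q^(2^k)`
and each step adds `m / Q^(2^(k+1))`. Hence `σ^[k] r` is the `k`-th partial sum of the series for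
`α`, the right endpoint of its shadow is the `(k+1)`-st, and `α` exceeds it by the positive tail.
-/

open Finset

theorem Rat.den_add_one_div_mul_den_sq {m : ℕ} (hm : 0 < m) (s : ℚ) :
    (s + 1 / (m * (s.den : ℚ) ^ 2)).den = m * s.den ^ 2 := by
  have hcop : IsCoprime ((m : ℤ) * s.num * s.den + 1) ((m : ℤ) * s.den ^ 2) := by
    have h : IsCoprime ((m : ℤ) * s.num * s.den + 1) ((m : ℤ) * s.den) := ⟨1, -s.num, by ring⟩
    exact h.of_mul_right_left.mul_right h.of_mul_right_right.pow_right
  have hval : s + 1 / (m * (s.den : ℚ) ^ 2) =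
      (((m : ℤ) * s.num * s.den + 1 : ℤ) : ℚ) / (((m : ℤ) * s.den ^ 2 : ℤ) : ℚ) := by
    nth_rewrite 1 [← Rat.num_div_den s]
    have : (s.den : ℚ) ≠ 0 := by positivity
    push_cast
    field_simp
  rw [hval]
  exact_mod_cast Rat.den_div_eq_of_coprime (by positivity) (Int.isCoprime_iff_gcd_eq_one.mp hcop)

theorem mul_sq_pow_two_pow_sub_one {M : Type*} [CommMonoid M] (a b : M) (k : ℕ) :
    a * (a ^ (2 ^ k - 1) * b ^ 2 ^ k) ^ 2 = a ^ (2 ^ (k + 1) - 1) * b ^ 2 ^ (k + 1) := by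
  obtain ⟨j, hj⟩ : ∃ j, 2 ^ k = j + 1 := ⟨2 ^ k - 1, (Nat.sub_add_cancel Nat.one_le_two_pow).symm⟩
  have hj' : 2 ^ (k + 1) = 2 * j + 2 := by rw [pow_succ]; omega
  rw [hj', hj, Nat.add_sub_cancel, show 2 * j + 2 - 1 = 2 * j + 1 by omega, mul_pow, ← pow_mul,
    ← pow_mul, ← mul_assoc, ← pow_succ', add_mul, one_mul, mul_comm j]

theorem one_div_mul_sq_eq_mul_one_div {K : Type*} [Field K] {m : K} (hm : m ≠ 0) (q : K) (k : ℕ) :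
    1 / (m * (m ^ (2 ^ k - 1) * q ^ 2 ^ k) ^ 2) = m * (1 / (m * q) ^ 2 ^ (k + 1)) := by
  have hpow : (m * q) ^ 2 ^ (k + 1) = m * (m ^ (2 ^ (k + 1) - 1) * q ^ 2 ^ (k + 1)) := by
    rw [mul_pow, ← mul_assoc, ← pow_succ', Nat.sub_add_cancel Nat.one_le_two_pow]
  rw [mul_sq_pow_two_pow_sub_one, hpow]
  field_simp

theorem summable_one_div_pow_two_pow_succ {Q : ℝ} (hQ : 1 < Q) :
    Summable fun n : ℕ => 1 / Q ^ 2 ^ (n + 1) := by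
  have hQ0 : 0 < Q := zero_lt_one.trans hQ
  refine (summable_geometric_of_lt_one (r := 1 / Q) (by positivity)
    ((div_lt_one hQ0).mpr hQ)).of_nonneg_of_le (fun n => by positivity) fun n => ?_
  rw [div_pow, one_pow]
  gcongr
  · exact hQ.le
  · exact (Nat.lt_two_pow_self.trans (Nat.pow_lt_pow_succ one_lt_two)).le

theorem sum_range_lt_tsum_of_pos {f : ℕ → ℝ} (hf : Summable f) (hpos : ∀ n, 0 < f n) (k : ℕ) :
    ∑ n ∈ range k, f n < ∑' n, f n :=
  calc ∑ n ∈ range k, f n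
      < ∑ n ∈ range (k + 1), f n := by rw [sum_range_succ]; linarith [hpos k]
    _ ≤ ∑' n, f n := hf.sum_le_tsum _ fun n _ => (hpos n).le

section RightDescendants

variable {m : ℕ} (hm : 0 < m) {σ : ℚ → ℚ} (hσ : ∀ s : ℚ, σ s = s + 1 / (m * (s.den : ℚ) ^ 2))
include hm hσ

theorem den_iterate_right (r : ℚ) (k : ℕ) :
    ((σ^[k]) r).den = m ^ (2 ^ k - 1) * r.den ^ 2 ^ k := by
  induction k with
  | zero => simp
  | succ k ih =>
    rw [Function.iterate_succ_apply', hσ, Rat.den_add_one_div_mul_den_sq hm, ih,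
      mul_sq_pow_two_pow_sub_one]

theorem iterate_right_eq (r : ℚ) (k : ℕ) :
    (σ^[k]) r = r + m * ∑ n ∈ range k, 1 / ((m : ℚ) * r.den) ^ 2 ^ (n + 1) := by
  induction k with
  | zero => simp
  | succ k ih =>
    rw [Function.iterate_succ_apply', hσ, den_iterate_right hm hσ, ih, sum_range_succ]
    push_cast
    rw [one_div_mul_sq_eq_mul_one_div (by exact_mod_cast hm.ne')]
    ring

end RightDescendants

theorem stmt_9 (m : ℕ) (hm : 2 ≤ m) (r : ℚ)
    (σ : ℚ → ℚ) (hσ : ∀ s : ℚ, σ s = s + 1 / (m * (s.den : ℚ) ^ 2)) :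
    Summable (fun n : ℕ => (1 : ℝ) / ((m : ℝ) * r.den) ^ (2 ^ (n + 1))) ∧
    ∀ k : ℕ, 1 ≤ k →
      ((r : ℝ) + m * ∑' n : ℕ, (1 : ℝ) / ((m : ℝ) * r.den) ^ (2 ^ (n + 1)))
        > ((σ^[k]) r : ℝ)
            + 1 / (m * ((m : ℝ) ^ (2 ^ k - 1) * (r.den : ℝ) ^ (2 ^ k)) ^ 2) := by
  have hm0 : 0 < m := by omega
  have hQ : 1 < (m : ℝ) * r.den := by
    have : (1 : ℝ) ≤ r.den := by exact_mod_cast r.pos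
    have : (2 : ℝ) ≤ m := by exact_mod_cast hm
    nlinarith
  have hsum := summable_one_div_pow_two_pow_succ hQ
  refine ⟨hsum, fun k _ => ?_⟩
  have hpartial := sum_range_lt_tsum_of_pos hsum (fun n => by positivity) (k + 1)
  rw [iterate_right_eq hm0 hσ, one_div_mul_sq_eq_mul_one_div (by positivity)]
  push_cast
  rw [gt_iff_lt, add_assoc, add_lt_add_iff_left, ← mul_add, ← sum_range_succ]
  exact mul_lt_mul_of_pos_left hpartial (by positivity)
end

section
/- (Folding Lemma) Let p/q = [a₀; a₁, …, a_n] be a finite continued fraction with a_n > 1 and q the denominator in lowest terms, and let m ≥ 2 be a natural number. Then p/q + (−1)^n/(m q²) = [a₀; a₁, …, a_n, m − 1, 1, a_n − 1, a_{n−1}, …, a₁]. -/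
/-- Value of the finite continued fraction `[a₀; a₁, …, a_n]`, entries given as rationals. -/
def cfVal : ℤ → List ℕ → ℚ
  | a₀, [] => a₀
  | a₀, a :: l => a₀ + 1 / cfVal a l

/-!
Write `K(a) = !![a, 1; 1, 0]` and `K(w)` for the product of these matrices along a word `w`.
Since `det K(w) = ±1`, the first column of `K = K(a₁ ⋯ aₙ)` is coprime, so it is `(q, p - a₀ q)`.
The word `a₁ ⋯ aₙ (m-1) 1 (aₙ-1) aₙ₋₁ ⋯ a₁` has matrix `K N Kᵀ` with `N = !![m, -1; 1, 0]`,
because `K(1) K(aₙ - 1) = !![1, 0; 1, -1] K(aₙ)`, `K(m-1) !![1, 0; 1, -1] = N` and reversing a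
word transposes its matrix. Splitting `N` into `m e₀₀` plus a skew part gives first column
`(m q², m q (p - a₀ q) + det K)` with `det K = (-1)ⁿ`, which is the claim.
-/

open Matrix

def cfMat (a : ℕ) : Matrix (Fin 2) (Fin 2) ℤ := !![(a : ℤ), 1; 1, 0]

def cfMatProd (l : List ℕ) : Matrix (Fin 2) (Fin 2) ℤ := (l.map cfMat).prod

@[simp]
lemma cfMatProd_nil : cfMatProd [] = 1 := rfl

@[simp]
lemma cfMatProd_cons (a : ℕ) (l : List ℕ) : cfMatProd (a :: l) = cfMat a * cfMatProd l := by
  simp [cfMatProd]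

lemma cfMatProd_append (u v : List ℕ) : cfMatProd (u ++ v) = cfMatProd u * cfMatProd v := by
  simp [cfMatProd]

lemma cfMat_transpose (a : ℕ) : (cfMat a)ᵀ = cfMat a := by
  ext i j; fin_cases i <;> fin_cases j <;> rfl

lemma cfMatProd_reverse (l : List ℕ) : cfMatProd l.reverse = (cfMatProd l)ᵀ := by
  simp only [cfMatProd, transpose_list_prod, List.map_map, List.map_reverse]
  congr 2
  exact List.map_congr_left fun a _ => (cfMat_transpose a).symm

lemma det_cfMatProd (l : List ℕ) : (cfMatProd l).det = (-1) ^ l.length := by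
  induction l with
  | nil => simp
  | cons a l ih =>
    rw [cfMatProd_cons, det_mul, ih, cfMat, det_fin_two_of, List.length_cons, pow_succ]
    ring

@[simp]
lemma cfMatProd_cons_zero_zero (a : ℕ) (l : List ℕ) :
    cfMatProd (a :: l) 0 0 = a * cfMatProd l 0 0 + cfMatProd l 1 0 := by
  simp [cfMat, mul_apply, Fin.sum_univ_two]

@[simp]
lemma cfMatProd_cons_one_zero (a : ℕ) (l : List ℕ) :
    cfMatProd (a :: l) 1 0 = cfMatProd l 0 0 := by
  simp [cfMat, mul_apply, Fin.sum_univ_two]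

lemma cfMatProd_col_zero_pos (l : List ℕ) (h : ∀ a ∈ l, 1 ≤ a) :
    1 ≤ cfMatProd l 0 0 ∧ 0 ≤ cfMatProd l 1 0 := by
  induction l with
  | nil => simp
  | cons a l ih =>
    obtain ⟨h00, h10⟩ := ih fun x hx => h x (List.mem_cons_of_mem _ hx)
    have ha : (1 : ℤ) ≤ a := by exact_mod_cast h a List.mem_cons_self
    simp only [cfMatProd_cons_zero_zero, cfMatProd_cons_one_zero]
    constructor <;> nlinarith

lemma cfVal_eq_div (a₀ : ℤ) (l : List ℕ) (h : ∀ a ∈ l, 1 ≤ a) :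
    cfVal a₀ l = (a₀ * cfMatProd l 0 0 + cfMatProd l 1 0 : ℤ) / (cfMatProd l 0 0 : ℤ) := by
  induction l generalizing a₀ with
  | nil => simp [cfVal]
  | cons a l ih =>
    have hl : ∀ x ∈ l, 1 ≤ x := fun x hx => h x (List.mem_cons_of_mem _ hx)
    obtain ⟨h00, h10⟩ := cfMatProd_col_zero_pos l hl
    have ha : (1 : ℤ) ≤ a := by exact_mod_cast h a List.mem_cons_self
    have hden : (0 : ℚ) < ((a * cfMatProd l 0 0 + cfMatProd l 1 0 : ℤ) : ℚ) := by
      exact_mod_cast (by nlinarith : (0 : ℤ) < a * cfMatProd l 0 0 + cfMatProd l 1 0)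
    have h00' : (0 : ℚ) < (cfMatProd l 0 0 : ℚ) := by exact_mod_cast h00
    rw [cfVal, ih a hl, cfMatProd_cons_zero_zero, cfMatProd_cons_one_zero]
    push_cast at hden ⊢
    field_simp

lemma isCoprime_cfMatProd_one_zero_zero_zero (l : List ℕ) :
    IsCoprime (cfMatProd l 1 0) (cfMatProd l 0 0) := by
  have hdet := det_cfMatProd l
  have hsq : ((-1 : ℤ) ^ l.length) * (-1) ^ l.length = 1 := by rw [← mul_pow]; norm_num
  rw [det_fin_two] at hdet
  refine ⟨-(-1) ^ l.length * cfMatProd l 0 1, (-1) ^ l.length * cfMatProd l 1 1, ?_⟩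
  linear_combination (-1 : ℤ) ^ l.length * hdet + hsq

lemma cfVal_den (a₀ : ℤ) (l : List ℕ) (h : ∀ a ∈ l, 1 ≤ a) :
    ((cfVal a₀ l).den : ℤ) = cfMatProd l 0 0 := by
  rw [cfVal_eq_div a₀ l h]
  refine Rat.den_div_eq_of_coprime (cfMatProd_col_zero_pos l h).1 ?_
  rw [← Int.isCoprime_iff_nat_coprime]
  simpa [add_comm, mul_comm] using (isCoprime_cfMatProd_one_zero_zero_zero l).add_mul_left_left a₀

lemma cfMat_one_mul_cfMat_sub_one (g : ℕ) (hg : 1 ≤ g) :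
    cfMat 1 * cfMat (g - 1) = !![1, 0; 1, -1] * cfMat g := by
  simp [cfMat, Nat.cast_sub hg, sub_eq_add_neg]

lemma cfMatProd_fold (m : ℕ) (hm : 1 ≤ m) (l : List ℕ) (hne : l ≠ []) (hg : 1 ≤ l.getLast hne) :
    cfMatProd (l ++ [m - 1, 1, l.getLast hne - 1] ++ l.dropLast.reverse) =
      cfMatProd l * !![(m : ℤ), -1; 1, 0] * (cfMatProd l)ᵀ := by
  set g := l.getLast hne
  have hsplit : cfMatProd l = cfMatProd l.dropLast * cfMat g := by
    conv_lhs => rw [← List.dropLast_append_getLast hne]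
    simp [cfMatProd_append, g]
  have hmid : cfMat (m - 1) * !![1, 0; 1, -1] = !![(m : ℤ), -1; 1, 0] := by
    simp [cfMat, Nat.cast_sub hm]
  calc cfMatProd (l ++ [m - 1, 1, g - 1] ++ l.dropLast.reverse)
      = cfMatProd l * cfMat (m - 1) * (cfMat 1 * cfMat (g - 1)) *
          (cfMatProd l.dropLast)ᵀ := by
        simp [cfMatProd_append, cfMatProd_reverse, Matrix.mul_assoc]
    _ = cfMatProd l * (cfMat (m - 1) * !![1, 0; 1, -1]) *
          (cfMatProd l.dropLast * cfMat g)ᵀ := by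
        rw [cfMat_one_mul_cfMat_sub_one g hg, transpose_mul, cfMat_transpose]
        simp only [Matrix.mul_assoc]
    _ = cfMatProd l * !![(m : ℤ), -1; 1, 0] * (cfMatProd l)ᵀ := by rw [hmid, ← hsplit]

section
variable {R : Type*} [CommRing R] (M : Matrix (Fin 2) (Fin 2) R) (c : R)

lemma mul_fold_mul_transpose_zero_zero : (M * !![c, -1; 1, 0] * Mᵀ) 0 0 = c * M 0 0 ^ 2 := by
  simp only [mul_apply, Fin.sum_univ_two, transpose_apply, of_apply, cons_val', cons_val_zero,
    cons_val_one, cons_val_fin_one]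
  ring

lemma mul_fold_mul_transpose_one_zero :
    (M * !![c, -1; 1, 0] * Mᵀ) 1 0 = c * M 0 0 * M 1 0 + M.det := by
  simp only [mul_apply, Fin.sum_univ_two, transpose_apply, of_apply, cons_val', cons_val_zero,
    cons_val_one, cons_val_fin_one, det_fin_two]
  ring

end

theorem stmt_11_general (m : ℕ) (hm : 2 ≤ m) (a₀ : ℤ) (as : List ℕ)
    (hne : as ≠ []) (hpos : ∀ a ∈ as, 1 ≤ a) (hlast : 1 < as.getLast hne)
    (p : ℤ) (q : ℕ)
    (hpq : ((p : ℚ) / q).num = p ∧ ((p : ℚ) / q).den = q)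
    (hval : cfVal a₀ as = (p : ℚ) / q) :
    (p : ℚ) / q + (-1) ^ as.length / (m * (q : ℚ) ^ 2) =
      cfVal a₀ (as ++ [m - 1, 1, as.getLast hne - 1] ++ as.dropLast.reverse) := by
  have hfold_pos : ∀ a ∈ as ++ [m - 1, 1, as.getLast hne - 1] ++ as.dropLast.reverse, 1 ≤ a := by
    simp only [List.mem_append, List.mem_reverse, List.mem_cons, List.not_mem_nil, or_false]
    rintro a ((ha | rfl | rfl | rfl) | ha)
    exacts [hpos a ha, by omega, le_rfl, by omega, hpos a (List.dropLast_subset as ha)]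
  have hq : cfMatProd as 0 0 = q := by rw [← hpq.2, ← hval, cfVal_den a₀ as hpos]
  have hq0 : (q : ℚ) ≠ 0 := by rw [← hpq.2]; exact_mod_cast Rat.den_ne_zero _
  have hm0 : (m : ℚ) ≠ 0 := by positivity
  rw [← hval, cfVal_eq_div a₀ as hpos, cfVal_eq_div a₀ _ hfold_pos,
    cfMatProd_fold m (by omega) as hne (by omega), mul_fold_mul_transpose_zero_zero,
    mul_fold_mul_transpose_one_zero, det_cfMatProd, hq]
  push_cast
  field_simp
  ring

theorem stmt_11 (m : ℕ) (hm : 2 ≤ m) (a₀ : ℤ) (as : List ℕ)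
    (hne : as ≠ []) (hpos : ∀ a ∈ as, 1 ≤ a) (hlast : 1 < as.getLast hne)
    (p : ℤ) (q : ℕ) (hq : 0 < q)
    (hpq : ((p : ℚ) / q).num = p ∧ ((p : ℚ) / q).den = q)
    (hval : cfVal a₀ as = (p : ℚ) / q) :
    (p : ℚ) / q + (-1) ^ as.length / (m * (q : ℚ) ^ 2) =
      cfVal a₀ (as ++ [m - 1, 1, as.getLast hne - 1] ++ as.dropLast.reverse) :=
  stmt_11_general m hm a₀ as hne hpos hlast p q hpq hval
end

section
/- Let U be a finite word over an alphabet. Suppose (V_k) is a sequence of words satisfying V'_k := (V_k with the final |U| letters removed), V_k = V'_k ++ U, and the recursion V'_{k+1} = V'_k ++ U ++ reverse(V'_k) for all k. If U is not a palindrome, then for no k is V'_k a palindrome. -/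
theorem List.reverse_append_append_reverse {α : Type*} (A U : List α) :
    (A ++ U ++ A.reverse).reverse = A ++ U.reverse ++ A.reverse := by
  simp only [List.reverse_append, List.reverse_reverse, List.append_assoc]

theorem List.reverse_append_append_reverse_eq_iff {α : Type*} (A U : List α) :
    (A ++ U ++ A.reverse).reverse = A ++ U ++ A.reverse ↔ U.reverse = U := by
  rw [List.reverse_append_append_reverse, List.append_left_inj, List.append_right_inj]

theorem stmt_13_general {α : Type*} (U : List α) (V' : ℕ → List α)
    (hrec : ∀ k, V' (k + 1) = V' k ++ U ++ (V' k).reverse)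
    (hU : U.reverse ≠ U) :
    ∀ k, 1 ≤ k → (V' k).reverse ≠ V' k := by
  rintro (_ | j) hk
  · omega
  · rw [hrec j, Ne, List.reverse_append_append_reverse_eq_iff]
    exact hU

theorem stmt_13 {α : Type*} (U : List α) (V V' : ℕ → List α)
    (hVk : ∀ k, V k = V' k ++ U)
    (hrec : ∀ k, V' (k + 1) = V' k ++ U ++ (V' k).reverse)
    (hU : U.reverse ≠ U) :
    ∀ k, 1 ≤ k → (V' k).reverse ≠ V' k :=
  stmt_13_general U V' hrec hU
end

section
/- Let (V_k)_{k≥1} be a sequence of finite nonempty words over an alphabet such that V_{k+1} begins with V_k ++ V_{k−1} for all k ≥ 2, and |V_{k+1}| = 2|V_k|. Let w be the infinite word that is the common limit (each V_k is a prefix of w). If w is eventually periodic, then there exists k₀ such that w is purely periodic and V_{k₀} is an integer power of the minimal period of w. -/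
/-!
Each block `V (k+1) ++ V k` being a prefix of `w` says that `w` repeats with shift `|V (k+1)|`
on a window of length `|V k|`, and these lengths double. An eventual period `T` then becomes a
global one: to compare `w n` and `w (n + T)`, shift both by a block length far beyond the
threshold. Once `|V k|` exceeds the minimal period `p`, the local repetition with shift
`|V (k+1)|` covers a full period and so holds everywhere; hence `p ∣ |V (k+1)|`, and
`V (k+1)` is a power of the first `p` letters.
-/

open Function

section

variable {α : Type*}

/-- The shift `w₀ w₁ w₂ ⋯ ↦ w₁ w₂ ⋯`, whose periodic points are the purely periodic words. -/
def shift (w : ℕ → α) : ℕ → α := fun n => w (n + 1)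

theorem shift_iterate (T : ℕ) (w : ℕ → α) : shift^[T] w = fun n => w (n + T) := by
  induction T with
  | zero => rfl
  | succ T ih =>
    rw [iterate_succ_apply', ih]
    funext n
    simp only [shift, Nat.add_right_comm, Nat.add_assoc]

theorem isPeriodicPt_shift_iff {w : ℕ → α} {T : ℕ} : IsPeriodicPt shift T w ↔ Periodic w T := by
  rw [IsPeriodicPt, IsFixedPt, shift_iterate, funext_iff]
  rfl

theorem periodic_of_eventually_of_prefix_recurs {w : ℕ → α} {N T : ℕ}
    (hT : ∀ n, N ≤ n → w (n + T) = w n)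
    (hrec : ∀ M, ∃ L, N ≤ L ∧ ∀ n < M, w (n + L) = w n) : Periodic w T := by
  intro n
  obtain ⟨L, hNL, hL⟩ := hrec (n + T + 1)
  calc w (n + T) = w (n + T + L) := (hL _ (by omega)).symm
    _ = w (n + L + T) := by rw [Nat.add_right_comm]
    _ = w (n + L) := hT _ (by omega)
    _ = w n := hL _ (by omega)

theorem Function.Periodic.periodic_of_forall_lt {w : ℕ → α} {T m : ℕ} (hT : Periodic w T)
    (hTpos : 0 < T) (hm : ∀ n < T, w (n + m) = w n) : Periodic w m := by
  intro n
  have hk : Periodic w (n / T * T) := by simpa using hT.nat_mul (n / T)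
  rw [← Nat.mod_add_div' n T, Nat.add_right_comm, hk, hk, hm _ (Nat.mod_lt n hTpos)]

theorem Function.Periodic.flatten_replicate {w : ℕ → α} {T : ℕ} (hT : Periodic w T) (m : ℕ) :
    (List.replicate m ((List.range T).map w)).flatten = (List.range (T * m)).map w := by
  induction m with
  | zero => simp
  | succ m ih =>
    rw [List.replicate_succ', List.flatten_append, ih, Nat.mul_succ, List.range_add,
      List.map_append, List.flatten_singleton, List.map_map]
    congr 1
    have hk : Periodic w (T * m) := by simpa [Nat.mul_comm] using hT.nat_mul m
    exact List.map_congr_left fun i _ => by rw [comp_apply, Nat.add_comm, hk]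

theorem apply_add_length_eq_of_append_isPrefix {w : ℕ → α} {A B C : List α}
    (hB : B = (List.range B.length).map w) (hC : C = (List.range C.length).map w)
    (h : A ++ B <+: C) (n : ℕ) (hn : n < B.length) : w (n + A.length) = w n := by
  obtain ⟨t, rfl⟩ := h
  have hlt : A.length + n < (A ++ B ++ t).length := by simp only [List.length_append]; omega
  have hleft : (A ++ B ++ t)[A.length + n]? = some (w n) := by
    rw [List.getElem?_append_left (by simpa using hn), List.getElem?_append_right (by omega),
      Nat.add_sub_cancel_left, hB]
    simp [hn]
  have hright : (A ++ B ++ t)[A.length + n]? = some (w (A.length + n)) := by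
    rw [hC, List.getElem?_map, List.getElem?_range hlt, Option.map_some]
  rw [Nat.add_comm]
  exact Option.some.inj (hright.symm.trans hleft)

theorem self_le_of_succ_eq_two_mul {L : ℕ → ℕ} (h1 : 0 < L 1)
    (h : ∀ k, 1 ≤ k → L (k + 1) = 2 * L k) (k : ℕ) (hk : 1 ≤ k) : k ≤ L k := by
  induction k, hk using Nat.le_induction with
  | base => exact h1
  | succ k hk ih => rw [h k hk]; omega

end

theorem stmt_14 {α : Type*} (w : ℕ → α) (V : ℕ → List α)
    (hne : ∀ k, V k ≠ [])
    (hprefix : ∀ k, V k = (List.range (V k).length).map w)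
    (hbegin : ∀ k, 2 ≤ k → (V k ++ V (k - 1)) <+: V (k + 1))
    (hlen : ∀ k, 1 ≤ k → (V (k + 1)).length = 2 * (V k).length)
    (hev : ∃ N T : ℕ, 0 < T ∧ ∀ n, N ≤ n → w (n + T) = w n) :
    ∃ T : ℕ, 0 < T ∧ (∀ n, w (n + T) = w n) ∧
      (∀ T' : ℕ, 0 < T' → (∀ n, w (n + T') = w n) → T ≤ T') ∧
      ∃ k₀ j : ℕ, V k₀ = (List.replicate j ((List.range T).map w)).flatten := by
  obtain ⟨N, T₀, hT₀pos, hT₀⟩ := hev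
  have hgrow : ∀ k, 1 ≤ k → k ≤ (V k).length :=
    self_le_of_succ_eq_two_mul (List.length_pos_iff.2 (hne 1)) hlen
  have hrec : ∀ k, 1 ≤ k → ∀ n < (V k).length, w (n + (V (k + 1)).length) = w n := fun k hk =>
    apply_add_length_eq_of_append_isPrefix (hprefix k) (hprefix (k + 2))
      (by simpa using hbegin (k + 1) (by omega))
  have hT₀per : Periodic w T₀ := by
    refine periodic_of_eventually_of_prefix_recurs hT₀ fun M =>
      ⟨(V (M + N + 2)).length, ?_, fun n hn => hrec (M + N + 1) (by omega) n ?_⟩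
    · have := hgrow (M + N + 2) (by omega); omega
    · have := hgrow (M + N + 1) (by omega); omega
  set T := minimalPeriod shift w
  have hTpos : 0 < T := (isPeriodicPt_shift_iff.2 hT₀per).minimalPeriod_pos hT₀pos
  have hT : Periodic w T := isPeriodicPt_shift_iff.1 (isPeriodicPt_minimalPeriod shift w)
  have hblock : Periodic w (V (T + 2)).length := hT.periodic_of_forall_lt hTpos
    fun n hn => hrec (T + 1) (by omega) n (by have := hgrow (T + 1) (by omega); omega)
  obtain ⟨j, hj⟩ := (isPeriodicPt_shift_iff.2 hblock).minimalPeriod_dvd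
  refine ⟨T, hTpos, hT, fun T' hT'pos hT' => (isPeriodicPt_shift_iff.2 hT').minimalPeriod_le hT'pos,
    T + 2, j, ?_⟩
  rw [hT.flatten_replicate, ← hj, ← hprefix]
end

section
/- Fix an integer m ≥ 2 and reduced rational p/q. The number α = p/q + m·∑_{k=1}^{∞} (m q)^{−2^k} is irrational. -/
/-!
For an integer `b ≥ 2` the partial sums of `∑ b^(-2^(n+1))` are rationals with denominator
`b^(2^N)`, while the tail is of order `b^(-2^(N+1))`, the square of that denominator. The series is
therefore approximable by rationals to exponent `2` (`LiouvilleWith 2`), a property that no rational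
number has and that survives `x ↦ r + m x` for rational `r` and `m ≠ 0`; take `b = m · den r`.
-/

open Filter Finset

section LacunaryPowers

variable {c : ℝ}

theorem pow_two_pow_add_le_mul_pow (hc0 : 0 ≤ c) (hc1 : c ≤ 1) (k M : ℕ) :
    c ^ 2 ^ (k + M) ≤ c ^ 2 ^ M * c ^ k := by
  rw [← pow_add]
  refine pow_le_pow_of_le_one hc0 hc1 ?_
  have hk : k < 2 ^ k := Nat.lt_two_pow_self
  have hM : 1 ≤ 2 ^ M := Nat.one_le_two_pow
  rw [pow_add]
  nlinarith

theorem summable_pow_two_pow_add (hc0 : 0 ≤ c) (hc1 : c < 1) (M : ℕ) :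
    Summable fun k => c ^ 2 ^ (k + M) :=
  ((summable_geometric_of_lt_one hc0 hc1).mul_left _).of_nonneg_of_le (fun _ => by positivity)
    (pow_two_pow_add_le_mul_pow hc0 hc1.le · M)

theorem tsum_pow_two_pow_add_le (hc0 : 0 ≤ c) (hc : c ≤ 1 / 2) (M : ℕ) :
    ∑' k, c ^ 2 ^ (k + M) ≤ 2 * c ^ 2 ^ M := by
  have hc1 : c < 1 := by linarith
  calc ∑' k, c ^ 2 ^ (k + M) ≤ ∑' k, c ^ 2 ^ M * c ^ k :=
        (summable_pow_two_pow_add hc0 hc1 M).tsum_le_tsum (pow_two_pow_add_le_mul_pow hc0 hc1.le · M)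
          ((summable_geometric_of_lt_one hc0 hc1).mul_left _)
    _ = c ^ 2 ^ M * (1 - c)⁻¹ := by rw [tsum_mul_left, tsum_geometric_of_lt_one hc0 hc1]
    _ ≤ c ^ 2 ^ M * 2 := by
        gcongr
        rw [inv_le_comm₀ (by linarith) two_pos]
        linarith
    _ = 2 * c ^ 2 ^ M := mul_comm _ _

end LacunaryPowers

theorem exists_int_sum_range_inv_pow_two_pow_eq_div (b : ℤ) (hb : b ≠ 0) (N : ℕ) :
    ∃ a : ℤ, ∑ n ∈ range N, ((b : ℝ)⁻¹) ^ 2 ^ (n + 1) = a / (b : ℝ) ^ 2 ^ N := by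
  have hbR : (b : ℝ) ≠ 0 := by exact_mod_cast hb
  refine ⟨∑ n ∈ range N, b ^ (2 ^ N - 2 ^ (n + 1)), ?_⟩
  rw [eq_div_iff (by positivity), Int.cast_sum, sum_mul]
  refine sum_congr rfl fun n hn => ?_
  have hle : 2 ^ (n + 1) ≤ 2 ^ N := Nat.pow_le_pow_right two_pos (mem_range.mp hn)
  rw [Int.cast_pow, pow_sub₀ _ hbR hle, inv_pow, mul_comm]

theorem liouvilleWith_two_tsum_one_div_pow_two_pow {b : ℕ} (hb : 2 ≤ b) :
    LiouvilleWith 2 (∑' n : ℕ, (1 : ℝ) / (b : ℝ) ^ 2 ^ (n + 1)) := by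
  set c : ℝ := (b : ℝ)⁻¹
  have hc0 : 0 ≤ c := by positivity
  have hc : c ≤ 1 / 2 := by rw [one_div]; exact inv_anti₀ two_pos (by exact_mod_cast hb)
  have hc1 : c < 1 := by linarith
  have hsum : Summable fun n => c ^ 2 ^ (n + 1) := summable_pow_two_pow_add hc0 hc1 1
  simp only [one_div, ← inv_pow]
  have approx : ∀ N : ℕ, ∃ a : ℤ, ∑' n, c ^ 2 ^ (n + 1) ≠ a / ((b ^ 2 ^ N : ℕ) : ℝ) ∧
      |∑' n, c ^ 2 ^ (n + 1) - a / ((b ^ 2 ^ N : ℕ) : ℝ)| < 3 / ((b ^ 2 ^ N : ℕ) : ℝ) ^ (2 : ℝ) := by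
    intro N
    obtain ⟨a, ha⟩ := exists_int_sum_range_inv_pow_two_pow_eq_div b (by positivity) N
    rw [Int.cast_natCast] at ha
    set T := ∑' k, c ^ 2 ^ (k + N + 1)
    have hsplit : ∑' n, c ^ 2 ^ (n + 1) - a / (b : ℝ) ^ 2 ^ N = T := by
      rw [← hsum.sum_add_tsum_nat_add N, ha, add_sub_cancel_left]
    have hT_pos : 0 < T := (summable_pow_two_pow_add hc0 hc1 (N + 1)).tsum_pos
      (fun _ => by positivity) 0 (by positivity)
    have hT_le : T ≤ 2 * c ^ 2 ^ (N + 1) := tsum_pow_two_pow_add_le hc0 hc (N + 1)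
    refine ⟨a, ?_, ?_⟩ <;> simp only [Nat.cast_pow, Real.rpow_two]
    · rw [← sub_ne_zero, hsplit]
      exact hT_pos.ne'
    · rw [hsplit, abs_of_pos hT_pos]
      refine hT_le.trans_lt ?_
      have hc_pow : c ^ 2 ^ (N + 1) = (((b : ℝ) ^ 2 ^ N) ^ 2)⁻¹ := by
        rw [pow_succ, pow_mul, inv_pow, inv_pow]
      rw [hc_pow, div_eq_mul_inv]
      gcongr
      norm_num
  have hden : Tendsto (fun N : ℕ => b ^ 2 ^ N) atTop atTop :=
    (tendsto_pow_atTop_atTop_of_one_lt hb).comp (tendsto_pow_atTop_atTop_of_one_lt one_lt_two)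
  exact ⟨3, hden.frequently (Frequently.of_forall approx)⟩

theorem stmt_19 (m : ℕ) (hm : 2 ≤ m) (r : ℚ) :
    Irrational ((r : ℝ) + m * ∑' n : ℕ, (1 : ℝ) / ((m : ℝ) * r.den) ^ (2 ^ (n + 1))) := by
  have hb : 2 ≤ m * r.den := hm.trans (Nat.le_mul_of_pos_right m r.pos)
  have hS := liouvilleWith_two_tsum_one_div_pow_two_pow hb
  push_cast at hS
  exact ((hS.nat_mul (by omega)).rat_add r).irrational one_lt_two
end
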